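/- arXiv:2409.13454 — 2 statements merged into one kernel-verified Lean document; each statement's English description precedes it below -/
import Mathlib

section
/- Let A ∈ ℝ^{s×d} be nonzero, p(x) = Σ_{i=0}^{k} c_i x^i a polynomial with c_i ≥ 0 for all i and c_0 > 0, and P = p(AᵀA). Then the spectral norm satisfies ‖P⁻¹AᵀA‖ ≤ (c_1 + c_0‖A‖⁻²)⁻¹. -/
open Matrix Polynomial
open scoped Matrix.Norms.L2Operator

/-!
By the continuous functional calculus, `P⁻¹ AᵀA = f(AᵀA)` with `f(x) = x / p(x)`, so its norm is
the maximum of `f` on the spectrum of `AᵀA`, which lies in `[0, ‖A‖²]`. There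
`p(x) ≥ c₀ + c₁ x`, and `x / (c₀ + c₁ x) = (c₁ + c₀ / x)⁻¹` increases with `x`.
-/

namespace Polynomial

lemma coeff_zero_add_coeff_one_mul_le_eval {p : ℝ[X]} (hcoeff : ∀ i, 0 ≤ p.coeff i) {x : ℝ}
    (hx : 0 ≤ x) : p.coeff 0 + p.coeff 1 * x ≤ p.eval x := by
  have hn : p.natDegree < max (p.natDegree + 1) 2 := by omega
  rw [eval_eq_sum_range' hn]
  calc p.coeff 0 + p.coeff 1 * x = ∑ i ∈ Finset.range 2, p.coeff i * x ^ i := by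
        simp [Finset.sum_range_succ]
    _ ≤ _ := Finset.sum_le_sum_of_subset_of_nonneg (by simp)
        fun i _ _ => mul_nonneg (hcoeff i) (pow_nonneg hx i)

lemma eval_inv_mul_le {p : ℝ[X]} (hcoeff : ∀ i, 0 ≤ p.coeff i) (hc0 : 0 < p.coeff 0)
    {x N : ℝ} (hx : 0 ≤ x) (hxN : x ≤ N) :
    (p.eval x)⁻¹ * x ≤ (p.coeff 1 + p.coeff 0 * N⁻¹)⁻¹ := by
  have hc1 := hcoeff 1
  rcases hx.eq_or_lt with rfl | hx
  · simp only [mul_zero]; positivity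
  have hN : 0 < N := hx.trans_le hxN
  calc (p.eval x)⁻¹ * x ≤ (p.coeff 0 + p.coeff 1 * x)⁻¹ * x := by
        gcongr; exact coeff_zero_add_coeff_one_mul_le_eval hcoeff hx.le
    _ = (p.coeff 1 + p.coeff 0 * x⁻¹)⁻¹ := by field_simp; ring
    _ ≤ _ := by gcongr

end Polynomial

section CStarAlgebra

variable {A : Type*} [NormedRing A] [StarRing A] [NormedAlgebra ℝ A]
  [IsometricContinuousFunctionalCalculus ℝ A IsSelfAdjoint]

lemma IsSelfAdjoint.le_norm_of_mem_spectrum {a : A} (ha : IsSelfAdjoint a) {x : ℝ}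
    (hx : x ∈ spectrum ℝ a) : x ≤ ‖a‖ := by
  simpa [cfc_id' ℝ a] using (le_abs_self x).trans (norm_apply_le_norm_cfc (fun y : ℝ => y) a hx)

lemma norm_ringInverse_aeval_mul_le {a : A} (ha : IsSelfAdjoint a)
    (hspec : ∀ x ∈ spectrum ℝ a, 0 ≤ x) {p : ℝ[X]} (hcoeff : ∀ i, 0 ≤ p.coeff i)
    (hc0 : 0 < p.coeff 0) :
    ‖Ring.inverse (aeval a p) * a‖ ≤ (p.coeff 1 + p.coeff 0 * ‖a‖⁻¹)⁻¹ := by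
  have heval_pos : ∀ x ∈ spectrum ℝ a, 0 < p.eval x := fun x hx =>
    hc0.trans_le <| (le_add_of_nonneg_right (mul_nonneg (hcoeff 1) (hspec x hx))).trans
      (coeff_zero_add_coeff_one_mul_le_eval hcoeff (hspec x hx))
  have hcfc : Ring.inverse (aeval a p) * a = cfc (fun x => (p.eval x)⁻¹ * x) a := by
    have hcont : ContinuousOn (fun x => (p.eval x)⁻¹) (spectrum ℝ a) :=
      p.continuous.continuousOn.inv₀ fun x hx => (heval_pos x hx).ne'
    rw [cfc_mul _ _ a, cfc_inv _ a fun x hx => (heval_pos x hx).ne', cfc_polynomial p a,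
      cfc_id' ℝ a]
  rw [hcfc]
  refine norm_cfc_le (by have := hcoeff 1; positivity) fun x hx => ?_
  have hx0 := hspec x hx
  rw [Real.norm_of_nonneg (mul_nonneg (inv_nonneg.2 (heval_pos x hx).le) hx0)]
  exact eval_inv_mul_le hcoeff hc0 hx0 (ha.le_norm_of_mem_spectrum hx)

end CStarAlgebra

lemma Matrix.posSemidef_transpose_mul_self {m n : Type*} [Fintype m] [Fintype n]
    (A : Matrix m n ℝ) : (Aᵀ * A).PosSemidef :=
  posSemidef_conjTranspose_mul_self A

theorem stmt_2_general (s d : ℕ) (A : Matrix (Fin s) (Fin d) ℝ)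
    (p : Polynomial ℝ) (hcoeff : ∀ i, 0 ≤ p.coeff i) (hc0 : 0 < p.coeff 0)
    (P : Matrix (Fin d) (Fin d) ℝ) (hP : P = Polynomial.aeval (Aᵀ * A) p) :
    ‖P⁻¹ * Aᵀ * A‖ ≤ (p.coeff 1 + p.coeff 0 * ‖A‖⁻¹ ^ 2)⁻¹ := by
  have hnorm : ‖Aᵀ * A‖ = ‖A‖ ^ 2 := by
    rw [sq, ← l2_opNorm_conjTranspose_mul_self A, conjTranspose_eq_transpose_of_trivial]
  obtain ⟨hherm, hspec⟩ :=
    posSemidef_iff_isHermitian_and_spectrum_nonneg.1 A.posSemidef_transpose_mul_self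
  have := norm_ringInverse_aeval_mul_le (a := Aᵀ * A) hherm.isSelfAdjoint hspec hcoeff hc0
  rwa [hnorm, ← inv_pow, ← nonsing_inv_eq_ringInverse, ← Matrix.mul_assoc, ← hP] at this

theorem stmt_2 (s d : ℕ) (A : Matrix (Fin s) (Fin d) ℝ) (hA : A ≠ 0)
    (p : Polynomial ℝ) (hcoeff : ∀ i, 0 ≤ p.coeff i) (hc0 : 0 < p.coeff 0)
    (P : Matrix (Fin d) (Fin d) ℝ) (hP : P = Polynomial.aeval (Aᵀ * A) p) :
    ‖P⁻¹ * Aᵀ * A‖ ≤ (p.coeff 1 + p.coeff 0 * ‖A‖⁻¹ ^ 2)⁻¹ :=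
  stmt_2_general s d A p hcoeff hc0 P hP
end

section
/- Let h : ℝ^{d'} → ℝ ∪ {∞} be proper, convex, lower semicontinuous, W ∈ ℝ^{d'×d}, R ∈ ℝ^{d×d} invertible, W̃ = WR⁻¹, and α > 0. Then for all z ∈ ℝ^d, prox_{α h∘W̃}(z) = R · prox^{RᵀR}_{α h∘W}(R⁻¹z), where prox^{M}_{φ}(a) = argmin_u φ(u) + (1/(2α))‖u−a‖²_M is the proximal operator in the metric induced by the symmetric positive definite matrix M = RᵀR, with ‖v‖²_M = vᵀMv. -/
/-! The substitution `x = R u` is a bijection of `ℝ^d` carrying the scaled prox objective at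
`R⁻¹ z` onto the plain prox objective at `z`, because `‖R u - z‖² = ‖u - R⁻¹ z‖²_{RᵀR}`;
minimizers correspond under any surjective reparametrization. -/

open Matrix

theorem Function.Surjective.setOf_forall_le_eq_image {α β γ : Type*} [Preorder γ]
    {e : α → β} (he : Function.Surjective e) (f : β → γ) :
    {x | ∀ y, f x ≤ f y} = e '' {u | ∀ v, f (e u) ≤ f (e v)} := by
  ext x
  constructor
  · intro hx
    obtain ⟨u, rfl⟩ := he x
    exact ⟨u, fun v => hx (e v), rfl⟩
  · rintro ⟨u, hu, rfl⟩ y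
    obtain ⟨v, rfl⟩ := he y
    exact hu v

theorem Matrix.mulVec_dotProduct_mulVec_self {m n : Type*} [Fintype m] [Fintype n]
    {𝕜 : Type*} [CommSemiring 𝕜] (A : Matrix m n 𝕜) (v : n → 𝕜) :
    A *ᵥ v ⬝ᵥ A *ᵥ v = v ⬝ᵥ (Aᵀ * A) *ᵥ v := by
  rw [← mulVec_mulVec, dotProduct_transpose_mulVec]

theorem Matrix.mulVec_sub_eq_mulVec_sub_nonsing_inv {n : Type*} [Fintype n] [DecidableEq n]
    {𝕜 : Type*} [CommRing 𝕜] {R : Matrix n n 𝕜} (hR : IsUnit R.det) (u z : n → 𝕜) :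
    R *ᵥ u - z = R *ᵥ (u - R⁻¹ *ᵥ z) := by
  rw [mulVec_sub, mulVec_mulVec, mul_nonsing_inv R hR, one_mulVec]

theorem stmt_4_general (d d' : ℕ) (h : (Fin d' → ℝ) → EReal)
    (W : Matrix (Fin d') (Fin d) ℝ)
    (R : Matrix (Fin d) (Fin d) ℝ) (hR : IsUnit R.det)
    (α : ℝ) (z : Fin d → ℝ)
    -- prox objective of α • (h ∘ W̃), with W̃ = W R⁻¹, at the point z
    (G : (Fin d → ℝ) → EReal)
    (hG : G = fun u => h ((W * R⁻¹) *ᵥ u) +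
      (((1 / (2 * α)) * ((u - z) ⬝ᵥ (u - z)) : ℝ) : EReal))
    -- prox objective of α • (h ∘ W) in the metric induced by M = RᵀR, at the point R⁻¹ z
    (H : (Fin d → ℝ) → EReal)
    (hH : H = fun u => h (W *ᵥ u) +
      (((1 / (2 * α)) *
        ((u - R⁻¹ *ᵥ z) ⬝ᵥ ((Rᵀ * R) *ᵥ (u - R⁻¹ *ᵥ z))) : ℝ) : EReal)) :
    -- prox_{α h∘W̃}(z) = R · prox^{RᵀR}_{α h∘W}(R⁻¹ z), as sets of minimizers
    {x | ∀ y, G x ≤ G y} = (fun u => R *ᵥ u) '' {x | ∀ y, H x ≤ H y} := by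
  have hHG : H = fun u => G (R *ᵥ u) := by
    subst hG hH
    funext u
    dsimp only
    rw [mulVec_mulVec, nonsing_inv_mul_cancel_right R W hR,
      mulVec_sub_eq_mulVec_sub_nonsing_inv hR, mulVec_dotProduct_mulVec_self]
  have hsurj : Function.Surjective (fun u => R *ᵥ u) :=
    mulVec_surjective_iff_isUnit.mpr ((isUnit_iff_isUnit_det R).mpr hR)
  rw [hHG]
  exact hsurj.setOf_forall_le_eq_image G

theorem stmt_4 (d d' : ℕ) (h : (Fin d' → ℝ) → EReal)
    (hproper_top : ∃ v, h v ≠ ⊤) (hproper_bot : ∀ v, h v ≠ ⊥)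
    (hconvex : ∀ x y : Fin d' → ℝ, ∀ t : ℝ, 0 ≤ t → t ≤ 1 →
      h (t • x + (1 - t) • y) ≤ ((t : ℝ) : EReal) * h x + (((1 - t : ℝ)) : EReal) * h y)
    (hlsc : LowerSemicontinuous h)
    (W : Matrix (Fin d') (Fin d) ℝ)
    (R : Matrix (Fin d) (Fin d) ℝ) (hR : IsUnit R.det)
    (α : ℝ) (hα : 0 < α) (z : Fin d → ℝ)
    -- prox objective of α • (h ∘ W̃), with W̃ = W R⁻¹, at the point z
    (G : (Fin d → ℝ) → EReal)
    (hG : G = fun u => h ((W * R⁻¹) *ᵥ u) +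
      (((1 / (2 * α)) * ((u - z) ⬝ᵥ (u - z)) : ℝ) : EReal))
    -- prox objective of α • (h ∘ W) in the metric induced by M = RᵀR, at the point R⁻¹ z
    (H : (Fin d → ℝ) → EReal)
    (hH : H = fun u => h (W *ᵥ u) +
      (((1 / (2 * α)) *
        ((u - R⁻¹ *ᵥ z) ⬝ᵥ ((Rᵀ * R) *ᵥ (u - R⁻¹ *ᵥ z))) : ℝ) : EReal)) :
    -- prox_{α h∘W̃}(z) = R · prox^{RᵀR}_{α h∘W}(R⁻¹ z), as sets of minimizers
    {x | ∀ y, G x ≤ G y} = (fun u => R *ᵥ u) '' {x | ∀ y, H x ≤ H y} :=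
  stmt_4_general d d' h W R hR α z G hG H hH
end
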